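/- Let X be a compact geodesic metric space, A ⊆ X nonempty and closed, and t_A := sInf {t : ℝ | 0 ≤ t ∧ Metric.cthickening t A = Set.univ}. Then for all s, t with 0 ≤ t ≤ s ≤ t_A, Metric.hausdorffDist (Metric.cthickening t A) (Metric.cthickening s A) = s - t. (Thus the trajectory t ↦ cthickening t A, 0 ≤ t ≤ t_A, is a geodesic path in the hyperspace from A to the whole space X.) -/

import Mathlib

/-!
In a geodesic space, walking the distance `t` from any point of `A` towards `x` shows that
`infDist x (cthickening t A) = infDist x A - t` whenever `t ≤ infDist x A`. Hence every point of
`cthickening s A` is within `s - t` of `cthickening t A`, and a point at distance exactly `s`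
from `A` (which exists by connectedness as long as `s` does not exceed the extinction time)
is at distance exactly `s - t`.
-/

/-- A metric space is geodesic if any two points are joined by a geodesic path. -/
def IsGeodesicMetricSpace (X : Type*) [MetricSpace X] : Prop :=
  ∀ x y : X, ∃ γ : ℝ → X, γ 0 = x ∧ γ (dist x y) = y ∧
    ∀ s ∈ Set.Icc (0 : ℝ) (dist x y), ∀ t ∈ Set.Icc (0 : ℝ) (dist x y),
      dist (γ s) (γ t) = |s - t|

open Metric Set

namespace Metric

variable {X : Type*} [PseudoMetricSpace X]

theorem mem_cthickening_iff_infDist_le {A : Set X} (hA : A.Nonempty) {δ : ℝ} (hδ : 0 ≤ δ)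
    {x : X} : x ∈ cthickening δ A ↔ infDist x A ≤ δ := by
  rw [mem_cthickening_iff, infDist, ← ENNReal.le_ofReal_iff_toReal_le (infEDist_ne_top hA) hδ]

theorem infDist_sub_le_infDist_cthickening {A : Set X} (hA : A.Nonempty) {t : ℝ} (ht : 0 ≤ t)
    (x : X) : infDist x A - t ≤ infDist x (cthickening t A) := by
  refine (le_infDist (hA.mono (self_subset_cthickening A))).2 fun z hz ↦ ?_
  have hzA : infDist z A ≤ t := (mem_cthickening_iff_infDist_le hA ht).1 hz
  linarith [infDist_le_infDist_add_dist (x := x) (y := z) (s := A)]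

end Metric

namespace IsGeodesicMetricSpace

variable {X : Type*} [MetricSpace X]

theorem exists_dist_eq_of_le (hX : IsGeodesicMetricSpace X) {x y : X} {r : ℝ} (hr₀ : 0 ≤ r)
    (hr : r ≤ dist x y) : ∃ z, dist x z = r ∧ dist z y = dist x y - r := by
  obtain ⟨γ, hγ₀, hγ₁, hγ⟩ := hX x y
  have h₀ : (0 : ℝ) ∈ Icc 0 (dist x y) := ⟨le_rfl, dist_nonneg⟩
  have h₁ : dist x y ∈ Icc 0 (dist x y) := ⟨dist_nonneg, le_rfl⟩
  refine ⟨γ r, ?_, ?_⟩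
  · rw [← hγ₀, hγ 0 h₀ r ⟨hr₀, hr⟩, zero_sub, abs_neg, abs_of_nonneg hr₀]
  · rw [← hγ₁, hγ r ⟨hr₀, hr⟩ _ h₁, hγ₁, abs_sub_comm, abs_of_nonneg (sub_nonneg.2 hr)]

theorem preconnectedSpace (hX : IsGeodesicMetricSpace X) : PreconnectedSpace X := by
  refine ⟨isPreconnected_of_forall_pair fun x _ y _ ↦ ?_⟩
  obtain ⟨γ, hγ₀, hγ₁, hγ⟩ := hX x y
  have hγc : ContinuousOn γ (Icc 0 (dist x y)) :=
    (LipschitzOnWith.of_dist_le_mul (K := 1) fun s hs t ht ↦ by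
      rw [hγ s hs t ht, NNReal.coe_one, one_mul, Real.dist_eq]).continuousOn
  refine ⟨γ '' Icc 0 (dist x y), subset_univ _, ⟨0, ⟨le_rfl, dist_nonneg⟩, hγ₀⟩,
    ⟨dist x y, ⟨dist_nonneg, le_rfl⟩, hγ₁⟩, isPreconnected_Icc.image _ hγc⟩

theorem infDist_cthickening_le (hX : IsGeodesicMetricSpace X) {A : Set X} (hA : A.Nonempty)
    {t : ℝ} (ht : 0 ≤ t) {x : X} (htx : t ≤ infDist x A) :
    infDist x (cthickening t A) ≤ infDist x A - t := by
  suffices ∀ a ∈ A, infDist x (cthickening t A) + t ≤ dist x a by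
    linarith [(le_infDist hA).2 this]
  intro a ha
  have hta : t ≤ dist a x := dist_comm x a ▸ htx.trans (infDist_le_dist_of_mem ha)
  obtain ⟨z, haz, hzx⟩ := hX.exists_dist_eq_of_le ht hta
  have hz : z ∈ cthickening t A := mem_cthickening_of_dist_le z a t A ha (dist_comm a z ▸ haz.le)
  linarith [infDist_le_dist_of_mem (x := x) hz, dist_comm x z, dist_comm x a]

theorem hausdorffDist_cthickening (hX : IsGeodesicMetricSpace X) {A : Set X} (hA : A.Nonempty)
    (hAb : Bornology.IsBounded A) {s t : ℝ} (ht : 0 ≤ t) (hts : t ≤ s) {x : X}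
    (hsx : s ≤ infDist x A) : hausdorffDist (cthickening t A) (cthickening s A) = s - t := by
  have hs : 0 ≤ s := ht.trans hts
  have hne : ∀ r, (cthickening r A).Nonempty := fun r ↦ hA.mono (self_subset_cthickening A)
  have hfin : hausdorffEDist (cthickening s A) (cthickening t A) ≠ ⊤ :=
    hausdorffEDist_ne_top_of_nonempty_of_bounded (hne s) (hne t) hAb.cthickening hAb.cthickening
  apply le_antisymm
  · refine hausdorffDist_le_of_infDist (sub_nonneg.2 hts) (fun y hy ↦ ?_) (fun y hy ↦ ?_)
    · rw [infDist_zero_of_mem (cthickening_mono hts A hy)]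
      exact sub_nonneg.2 hts
    · rcases le_total (infDist y A) t with hyt | hty
      · rw [infDist_zero_of_mem ((mem_cthickening_iff_infDist_le hA ht).2 hyt)]
        exact sub_nonneg.2 hts
      · have hys := (mem_cthickening_iff_infDist_le hA hs).1 hy
        linarith [hX.infDist_cthickening_le hA ht hty]
  · have := hX.preconnectedSpace
    obtain ⟨a, ha⟩ := hA
    obtain ⟨y, hy⟩ : ∃ y, infDist y A = s :=
      intermediate_value_univ a x (continuous_infDist_pt A)
        ⟨(infDist_zero_of_mem ha).symm ▸ hs, hsx⟩
    have hys : y ∈ cthickening s A := (mem_cthickening_iff_infDist_le ⟨a, ha⟩ hs).2 hy.le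
    rw [hausdorffDist_comm]
    linarith [infDist_sub_le_infDist_cthickening ⟨a, ha⟩ ht y,
      infDist_le_hausdorffDist_of_mem hys hfin]

end IsGeodesicMetricSpace

theorem exists_sInf_le_infDist {X : Type*} [MetricSpace X] [CompactSpace X] {A : Set X}
    (hA : A.Nonempty) : ∃ x, sInf {t : ℝ | 0 ≤ t ∧ cthickening t A = univ} ≤ infDist x A := by
  have : Nonempty X := hA.to_subtype.map Subtype.val
  obtain ⟨x, -, hx⟩ := isCompact_univ.exists_isMaxOn univ_nonempty
    (continuous_infDist_pt A).continuousOn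
  refine ⟨x, csInf_le ⟨0, fun r hr ↦ hr.1⟩ ⟨infDist_nonneg, eq_univ_of_forall fun y ↦ ?_⟩⟩
  exact (mem_cthickening_iff_infDist_le hA infDist_nonneg).2 (hx (mem_univ y))

theorem trajectory_is_geodesic_in_hyperspace_general
    {X : Type*} [MetricSpace X] [CompactSpace X]
    (hgeo : IsGeodesicMetricSpace X)
    (A : Set X) (hA : A.Nonempty)
    (tA : ℝ) (htA : tA = sInf {t : ℝ | 0 ≤ t ∧ Metric.cthickening t A = Set.univ}) :
    ∀ s t : ℝ, 0 ≤ t → t ≤ s → s ≤ tA →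
      Metric.hausdorffDist (Metric.cthickening t A) (Metric.cthickening s A) = s - t := by
  intro s t ht hts hstA
  obtain ⟨x, hx⟩ := exists_sInf_le_infDist hA
  exact hgeo.hausdorffDist_cthickening hA isBounded_of_compactSpace ht hts ((htA ▸ hstA).trans hx)

/-- In a compact geodesic metric space, the trajectory `t ↦ cthickening t A` of a
nonempty closed set `A` under the semiflow is a geodesic path in the hyperspace with
the Hausdorff metric: `d_H(cthickening t A, cthickening s A) = s - t` for
`0 ≤ t ≤ s ≤ t_A`, where `t_A` is the extinction time of `A`. -/
theorem trajectory_is_geodesic_in_hyperspace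
    {X : Type*} [MetricSpace X] [CompactSpace X]
    (hgeo : IsGeodesicMetricSpace X)
    (A : Set X) (hA : A.Nonempty) (hAclosed : IsClosed A)
    (tA : ℝ) (htA : tA = sInf {t : ℝ | 0 ≤ t ∧ Metric.cthickening t A = Set.univ}) :
    ∀ s t : ℝ, 0 ≤ t → t ≤ s → s ≤ tA →
      Metric.hausdorffDist (Metric.cthickening t A) (Metric.cthickening s A) = s - t :=
  trajectory_is_geodesic_in_hyperspace_general hgeo A hA tA htA
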